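/- arXiv:1911.06240 — 2 statements merged into one kernel-verified Lean document; each statement's English description precedes it below -/
import Mathlib

section
/- The coordinate change (r₁, r₂, p_{r₁}, p_{r₂}) ↦ (q₁, q₂, p₁, p₂) defined by q₁ = (r₁ - R_min)(r₂ - R_min) - (R_s - R_min)², q₂ = ½(r₁ - R_min)² - ½(r₂ - R_min)², p₁ = ((r₂ - R_min) p_{r₁} + (r₁ - R_min) p_{r₂}) / ((r₁ - R_min)² + (r₂ - R_min)²), p₂ = ((r₁ - R_min) p_{r₁} - (r₂ - R_min) p_{r₂}) / ((r₁ - R_min)² + (r₂ - R_min)²) is symplectic wherever (r₁, r₂) ≠ (R_min, R_min): that is, dp_{r₁} ∧ dr₁ + dp_{r₂} ∧ dr₂ = dp₁ ∧ dq₁ + dp₂ ∧ dq₂. -/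
/-- Points of phase space, ordered as `(r₁, p_{r₁}, r₂, p_{r₂})`. -/
abbrev PhasePt := ℝ × ℝ × ℝ × ℝ

/-- The canonical symplectic bilinear form `dp_{r₁} ∧ dr₁ + dp_{r₂} ∧ dr₂`
evaluated on two tangent vectors, in coordinates `(r₁, p_{r₁}, r₂, p_{r₂})`. -/
def canonicalForm (u v : PhasePt) : ℝ :=
  u.2.1 * v.1 - u.1 * v.2.1 + u.2.2.2 * v.2.2.1 - u.2.2.1 * v.2.2.2

/-- The coordinate change `(r₁, p_{r₁}, r₂, p_{r₂}) ↦ (q₁, p₁, q₂, p₂)`. -/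
noncomputable def coordChange (Rmin Rs : ℝ) (x : PhasePt) : PhasePt :=
  let r₁ := x.1; let pr₁ := x.2.1; let r₂ := x.2.2.1; let pr₂ := x.2.2.2
  let d := (r₁ - Rmin)^2 + (r₂ - Rmin)^2
  ((r₁ - Rmin) * (r₂ - Rmin) - (Rs - Rmin)^2,
   ((r₂ - Rmin) * pr₁ + (r₁ - Rmin) * pr₂) / d,
   ((1:ℝ)/2 * (r₁ - Rmin)^2 - (1:ℝ)/2 * (r₂ - Rmin)^2,
   ((r₁ - Rmin) * pr₁ - (r₂ - Rmin) * pr₂) / d))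

/-- The coordinate change `(r₁, r₂, p_{r₁}, p_{r₂}) ↦ (q₁, q₂, p₁, p₂)` is
symplectic wherever `(r₁, r₂) ≠ (R_min, R_min)`: its derivative preserves the
canonical symplectic form `dp_{r₁} ∧ dr₁ + dp_{r₂} ∧ dr₂`. -/
theorem coordChange_symplectic (Rmin Rs : ℝ) (x : PhasePt)
    (hx : (x.1 - Rmin)^2 + (x.2.2.1 - Rmin)^2 ≠ 0) :
    ∀ u v : PhasePt,
      canonicalForm (fderiv ℝ (coordChange Rmin Rs) x u)
        (fderiv ℝ (coordChange Rmin Rs) x v) = canonicalForm u v := by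
  intro u v
  -- projections
  have h1 : HasFDerivAt (fun y : PhasePt => y.1)
      (ContinuousLinearMap.fst ℝ ℝ (ℝ × ℝ × ℝ)) x := hasFDerivAt_fst
  have h2 : HasFDerivAt (fun y : PhasePt => y.2.1)
      ((ContinuousLinearMap.fst ℝ ℝ (ℝ × ℝ)).comp
        (ContinuousLinearMap.snd ℝ ℝ (ℝ × ℝ × ℝ))) x :=
    hasFDerivAt_fst.comp x hasFDerivAt_snd
  have h3 : HasFDerivAt (fun y : PhasePt => y.2.2.1)
      ((ContinuousLinearMap.fst ℝ ℝ ℝ).comp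
        ((ContinuousLinearMap.snd ℝ ℝ (ℝ × ℝ)).comp
          (ContinuousLinearMap.snd ℝ ℝ (ℝ × ℝ × ℝ)))) x :=
    hasFDerivAt_fst.comp x (hasFDerivAt_snd.comp x hasFDerivAt_snd)
  have h4 : HasFDerivAt (fun y : PhasePt => y.2.2.2)
      ((ContinuousLinearMap.snd ℝ ℝ ℝ).comp
        ((ContinuousLinearMap.snd ℝ ℝ (ℝ × ℝ)).comp
          (ContinuousLinearMap.snd ℝ ℝ (ℝ × ℝ × ℝ)))) x :=
    hasFDerivAt_snd.comp x (hasFDerivAt_snd.comp x hasFDerivAt_snd)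
  have hA := h1.sub_const Rmin
  have hB := h3.sub_const Rmin
  have hx' : (x.1 - Rmin)*(x.1 - Rmin) + (x.2.2.1 - Rmin)*(x.2.2.1 - Rmin) ≠ 0 := by
    simpa [pow_two] using hx
  have hd := (hA.mul hA).add (hB.mul hB)
  have hf1 := (hA.mul hB).sub_const ((Rs - Rmin)^2)
  have hinv := (hasFDerivAt_inv' (𝕜 := ℝ) hx').comp x hd
  have hf2 := ((hB.mul h2).add (hA.mul h4)).mul hinv
  have hf3 := ((hA.mul hA).const_mul ((1:ℝ)/2)).sub ((hB.mul hB).const_mul ((1:ℝ)/2))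
  have hf4 := ((hA.mul h2).sub (hB.mul h4)).mul hinv
  have hF := HasFDerivAt.prodMk hf1 (HasFDerivAt.prodMk hf2 (HasFDerivAt.prodMk hf3 hf4))
  have hco : HasFDerivAt (coordChange Rmin Rs) _ x := hF.congr_of_eventuallyEq (Filter.Eventually.of_forall (fun y => by
    simp only [coordChange, pow_two, div_eq_mul_inv, Function.comp_apply, Function.comp, Pi.mul_apply, Pi.add_apply, Pi.sub_apply]))
  rw [hco.fderiv]
  simp only [canonicalForm, ContinuousLinearMap.prod_apply, ContinuousLinearMap.add_apply,
    ContinuousLinearMap.sub_apply, ContinuousLinearMap.smul_apply, ContinuousLinearMap.comp_apply,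
    ContinuousLinearMap.coe_fst', ContinuousLinearMap.coe_snd',
    ContinuousLinearMap.one_apply, ContinuousLinearMap.neg_apply,
    ContinuousLinearMap.mulLeftRight_apply, smul_eq_mul, Pi.mul_apply, Pi.add_apply, Pi.sub_apply,
    Function.comp_apply]
  field_simp
  ring
end

section
/- Let P be a bijection of X, and suppose sets R_i, R_j and lobes L_{i,j}(k), L_{j,i}(k) satisfy: Pᵏ L_{i,j}(n) = L_{i,j}(n-k), L_{i,j}(1) ⊆ R_i, L_{i,j}(0) ⊆ R_j, L_{j,i}(1) ⊆ R_j, L_{j,i}(0) ⊆ R_i, and X = R_i ∪ R_j with R_i ∩ R_j = ∅ (up to boundary). If k₁ < k₃ and p ∈ L_{i,j}(k₁) ∩ L_{i,j}(k₃), then there exists k₂ with k₁ < k₂ < k₃ and p ∈ L_{j,i}(k₂). Hence L_{i,j}(k₁) ∩ L_{i,j}(k₃) = ⋃_{k₂=k₁+1}^{k₃-1} L_{i,j}(k₁) ∩ L_{j,i}(k₂) ∩ L_{i,j}(k₃). -/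
private lemma lobe_key {X : Type*} (P : Equiv.Perm X) (Ri Rj : Set X)
    (hcover : ∀ x, x ∈ Ri ∨ x ∈ Rj) (p : X) :
    ∀ n : ℕ, ∀ a : ℤ, (P ^ a) p ∈ Rj → (P ^ (a + 1 + (n : ℤ))) p ∈ Ri →
      ∃ k, a < k ∧ k ≤ a + 1 + (n : ℤ) ∧ (P ^ (k - 1)) p ∈ Rj ∧ (P ^ k) p ∈ Ri := by
  intro n
  induction n with
  | zero =>
    intro a ha hb
    exact ⟨a + 1, by omega, by omega, by simpa using ha, by simpa using hb⟩
  | succ n ih =>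
    intro a ha hb
    rcases hcover ((P ^ (a + 1)) p) with h1 | h1
    · exact ⟨a + 1, by omega, by omega, by simpa using ha, h1⟩
    · have hb' : (P ^ (a + 1 + 1 + (n : ℤ))) p ∈ Ri := by
        have : a + 1 + 1 + (n : ℤ) = a + 1 + ((n : ℤ) + 1) := by ring
        rw [this]; exact_mod_cast hb
      obtain ⟨k, hk1, hk2, hk3, hk4⟩ := ih (a + 1) h1 hb'
      exact ⟨k, by omega, by push_cast; omega, hk3, hk4⟩

/-- Reentry of lobes: if a point lies in two lobes `L_{i,j}(k₁)` and
`L_{i,j}(k₃)` with `k₁ < k₃`, then it lies in some lobe `L_{j,i}(k₂)` with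
`k₁ < k₂ < k₃`; hence the intersection decomposes as a union over
intermediate escape times. -/
theorem lobe_reentry {X : Type*} (P : Equiv.Perm X) (Ri Rj : Set X)
    (hcover : ∀ x, x ∈ Ri ∨ x ∈ Rj) (hdisj : Disjoint Ri Rj)
    (Lij Lji : ℤ → Set X)
    (hLij : ∀ (k : ℤ) (x : X),
      x ∈ Lij k ↔ (P ^ (k - 1)) x ∈ Ri ∧ (P ^ k) x ∈ Rj)
    (hLji : ∀ (k : ℤ) (x : X),
      x ∈ Lji k ↔ (P ^ (k - 1)) x ∈ Rj ∧ (P ^ k) x ∈ Ri) :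
    ∀ k₁ k₃ : ℤ, k₁ < k₃ →
      ((∀ p ∈ Lij k₁ ∩ Lij k₃, ∃ k₂, k₁ < k₂ ∧ k₂ < k₃ ∧ p ∈ Lji k₂) ∧
        Lij k₁ ∩ Lij k₃ =
          ⋃ k₂ ∈ Set.Ioo k₁ k₃, Lij k₁ ∩ Lji k₂ ∩ Lij k₃) := by
  intro k₁ k₃ hlt
  have main : ∀ p ∈ Lij k₁ ∩ Lij k₃, ∃ k₂, k₁ < k₂ ∧ k₂ < k₃ ∧ p ∈ Lji k₂ := by
    rintro p ⟨h1, h3⟩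
    rw [hLij] at h1 h3
    -- P^k₁ p ∈ Rj, P^(k₃-1) p ∈ Ri
    have hne : k₁ < k₃ - 1 := by
      rcases lt_or_eq_of_le (by omega : k₁ ≤ k₃ - 1) with h | h
      · exact h
      · exfalso
        exact hdisj.ne_of_mem (h ▸ h3.1) h1.2 rfl
    set n : ℕ := (k₃ - 1 - (k₁ + 1)).toNat with hn
    have hcast : k₁ + 1 + (n : ℤ) = k₃ - 1 := by
      have : (n : ℤ) = k₃ - 1 - (k₁ + 1) := Int.toNat_of_nonneg (by omega)
      omega
    obtain ⟨k, hk1, hk2, hk3, hk4⟩ :=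
      lobe_key P Ri Rj hcover p n k₁ h1.2 (by rw [hcast]; exact h3.1)
    exact ⟨k, hk1, by omega, (hLji k p).2 ⟨hk3, hk4⟩⟩
  refine ⟨main, ?_⟩
  ext p
  simp only [Set.mem_iUnion, Set.mem_inter_iff, Set.mem_Ioo, exists_prop]
  constructor
  · rintro ⟨h1, h3⟩
    obtain ⟨k₂, hk1, hk2, hk⟩ := main p ⟨h1, h3⟩
    exact ⟨k₂, ⟨hk1, hk2⟩, ⟨h1, hk⟩, h3⟩
  · rintro ⟨k₂, _, ⟨h1, _⟩, h3⟩
    exact ⟨h1, h3⟩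
end
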